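/- arXiv:2210.02002 — 2 statements merged into one kernel-verified Lean document; each statement's English description precedes it below -/
import Mathlib

section
/- Let N₁, N₂ ∈ ℕ with N₁, N₂ ≥ 2 and δ > 0. Then for any set of points {(x_i, y_i)}_{i=0}^{N₁N₂−1} with x_i ≥ x_{i−1} + δ for all i and x_i, y_i ∈ [0,1], there exists a 3-hidden-layer ReLU network g† with layer widths (1, 2N₁−1, 4(N₂−2)+2, 8(N₂−2)+2, 1) and all weights bounded in absolute value by 4/δ², such that: (1) g†(x_i) = y_i for all i ∈ {0,…,N₁N₂−1}; (2) g† is linear on [x_{i−1}, x_i] whenever i ∉ {jN₂ : j = 1,…,N₁−1}. Moreover, the weights of the first and last affine layers are all bounded in absolute value by 1. -/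
open MeasureTheory ProbabilityTheory
open scoped ENNReal BigOperators

noncomputable section

/-- Euclidean (ℓ²) norm on `Fin d → ℝ`. -/
def euclNorm {d : ℕ} (x : Fin d → ℝ) : ℝ := Real.sqrt (∑ i, (x i) ^ 2)

/-- ReLU activation applied entrywise. -/
def reluVec {d : ℕ} (v : Fin d → ℝ) : Fin d → ℝ := fun i => max (v i) 0

/-- Truncation operator `T_M` at level `M` (identity when `M = ∞`). -/
def trunc (M : ℝ≥0∞) (z : ℝ) : ℝ :=
  if M = ⊤ then z else Real.sign z * min |z| M.toReal

/-- Entrywise truncation. -/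
def truncVec {d : ℕ} (M : ℝ≥0∞) (v : Fin d → ℝ) : Fin d → ℝ := fun i => trunc M (v i)

/-- An affine layer of a neural network. -/
structure Layer (din dout : ℕ) where
  W : Matrix (Fin dout) (Fin din) ℝ
  b : Fin dout → ℝ

/-- The affine map computed by a layer. -/
def Layer.apply {din dout : ℕ} (A : Layer din dout) (x : Fin din → ℝ) : Fin dout → ℝ :=
  fun i => (∑ j, A.W i j * x j) + A.b i

/-- All entries of the layer are bounded by `B` (in `ℝ≥0∞`; `B = ∞` means no constraint). -/
def Layer.Bounded {din dout : ℕ} (A : Layer din dout) (B : ℝ≥0∞) : Prop :=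
  (∀ i j, (‖A.W i j‖₊ : ℝ≥0∞) ≤ B) ∧ ∀ i, (‖A.b i‖₊ : ℝ≥0∞) ≤ B

/-- Apply `k` hidden layers, each an affine map followed by the entrywise ReLU. -/
def stack {N : ℕ} : (k : ℕ) → (Fin k → Layer N N) → (Fin N → ℝ) → (Fin N → ℝ)
  | 0, _, x => x
  | k + 1, As, x => stack k (fun i => As i.succ) (reluVec ((As 0).apply x))

/-- The function computed by a deep ReLU network with input layer `A0`, hidden layers `Amid`,
output layer `Aout`, with outputs truncated at level `M`. -/
def netFun {din dout N k : ℕ} (M : ℝ≥0∞)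
    (A0 : Layer din N) (Amid : Fin k → Layer N N) (Aout : Layer N dout)
    (x : Fin din → ℝ) : Fin dout → ℝ :=
  truncVec M (Aout.apply (stack k Amid (reluVec (A0.apply x))))

/-- The deep ReLU network class `𝒢(L, din, dout, N, M, B)`:
depth (number of hidden layers) `L`, hidden width `N`, outputs truncated at `M`,
all weights bounded by `B`. -/
def ReluNets (L din dout N : ℕ) (M B : ℝ≥0∞) :
    Set ((Fin din → ℝ) → (Fin dout → ℝ)) :=
  { f | ∃ (A0 : Layer din N) (Amid : Fin (L - 1) → Layer N N) (Aout : Layer N dout),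
      A0.Bounded B ∧ (∀ i, (Amid i).Bounded B) ∧ Aout.Bounded B ∧
      f = netFun M A0 Amid Aout }

/-- Scalar-output deep ReLU networks `𝒢(L, din, 1, N, M, B)`. -/
def ReluNets1 (L din N : ℕ) (M B : ℝ≥0∞) : Set ((Fin din → ℝ) → ℝ) :=
  { f | ∃ g ∈ ReluNets L din 1 N M B, ∀ x, f x = g x 0 }

/-- `(β, C)`-smooth `d`-variate function: writing `β = q + s` with `q ∈ ℕ`, `s ∈ (0,1]`,
all partial derivatives up to order `q` exist and the order-`q` derivative is
`s`-Hölder with constant `C` (w.r.t. the Euclidean norm). -/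
def HolderSmooth (d : ℕ) (β C : ℝ) (f : (Fin d → ℝ) → ℝ) : Prop :=
  ∃ (q : ℕ) (s : ℝ), 0 < s ∧ s ≤ 1 ∧ β = (q : ℝ) + s ∧
    ContDiff ℝ (q : ℕ∞) f ∧
    ∀ x z : Fin d → ℝ,
      ‖iteratedFDeriv ℝ q f x - iteratedFDeriv ℝ q f z‖ ≤ C * euclNorm (x - z) ^ s

/-- Hierarchical composition model: `HCM C P d l` is the class `H(d, l+1, 𝒫)`
(the index is shifted so that `HCM C P d 0` is the base level `H(d, 1, 𝒫)`). -/
def HCM (C : ℝ) (P : Set (ℝ × ℕ)) (d : ℕ) : ℕ → Set ((Fin d → ℝ) → ℝ)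
  | 0 =>
    { h | ∃ (β : ℝ) (t : ℕ), (β, t) ∈ P ∧
        ∃ (g : (Fin t → ℝ) → ℝ) (π : Fin t → Fin d),
          HolderSmooth t β C g ∧ ∀ x, h x = g fun i => x (π i) }
  | l + 1 =>
    { h | ∃ (β : ℝ) (t : ℕ), (β, t) ∈ P ∧
        ∃ (g : (Fin t → ℝ) → ℝ) (F : Fin t → (Fin d → ℝ) → ℝ),
          HolderSmooth t β C g ∧ (∀ i, F i ∈ HCM C P d l) ∧
          ∀ x, h x = g fun i => F i x }

/-- Frobenius norm of a matrix. -/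
def frobNorm {m n : ℕ} (A : Matrix (Fin m) (Fin n) ℝ) : ℝ :=
  Real.sqrt (∑ i, ∑ j, (A i j) ^ 2)

/-- Smallest singular value. -/
def nuMin {m n : ℕ} (A : Matrix (Fin m) (Fin n) ℝ) : ℝ :=
  sInf {c | ∃ x : Fin n → ℝ, euclNorm x = 1 ∧ c = euclNorm (A.mulVec x)}

/-- Largest singular value. -/
def nuMax {m n : ℕ} (A : Matrix (Fin m) (Fin n) ℝ) : ℝ :=
  sSup {c | ∃ x : Fin n → ℝ, euclNorm x = 1 ∧ c = euclNorm (A.mulVec x)}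

/-- Smallest eigenvalue (Rayleigh quotient) of a symmetric matrix. -/
def lamMin {n : ℕ} (A : Matrix (Fin n) (Fin n) ℝ) : ℝ :=
  sInf {c | ∃ x : Fin n → ℝ, euclNorm x = 1 ∧ c = ∑ i, x i * A.mulVec x i}

/-- Largest eigenvalue (Rayleigh quotient) of a symmetric matrix. -/
def lamMax {n : ℕ} (A : Matrix (Fin n) (Fin n) ℝ) : ℝ :=
  sSup {c | ∃ x : Fin n → ℝ, euclNorm x = 1 ∧ c = ∑ i, x i * A.mulVec x i}

/-- The clipped-`L₁` function `ψ_τ`. -/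
def clipL1 (τ z : ℝ) : ℝ := min (|z| / τ) 1

end

/-!
Split the points into `N₁` blocks of `N₂` consecutive points. On each block the piecewise
linear interpolant is the secant through the two end points of the block plus, for every
interior node, the residual at that node times the hat function of that node.

The first hidden layer computes the features `(z - K)₊` at the block end points `K` (all but
the last). The pre-activation of a second-layer unit is therefore a piecewise linear function
with breaks only at block end points, i.e. an arbitrary affine function on each block. On a
block these units are the secant and, for each interior node and each sign, `a R / 2` and
`a (R - F) / 4`, where `R` and `F` are the rising and falling sides of the hat and `a` is the
positive or the negative part of the residual. The third layer forms
`(2 u - 4 v)₊ = a (min R F)₊`, a scaled hat, and the output layer adds the secant and the signed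
hats.

For the weight bounds: the values of a second-layer unit at the block end points are at most
`1/δ` and consecutive end points are at least `δ` apart, so its slope changes, which are its
weights, are at most `4/δ²`.
-/

open Finset Set

noncomputable section

def IsAffineOn (f : ℝ → ℝ) (s : Set ℝ) : Prop :=
  ∃ a b : ℝ, ∀ z ∈ s, f z = a * z + b

namespace IsAffineOn

variable {f g : ℝ → ℝ} {s t : Set ℝ}

theorem of_forall_eq (a b : ℝ) (h : ∀ z, f z = a * z + b) : IsAffineOn f s :=
  ⟨a, b, fun z _ => h z⟩

theorem const (c : ℝ) : IsAffineOn (fun _ => c) s :=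
  of_forall_eq 0 c fun _ => by ring

theorem add (hf : IsAffineOn f s) (hg : IsAffineOn g s) : IsAffineOn (fun z => f z + g z) s := by
  obtain ⟨a, b, hf⟩ := hf
  obtain ⟨a', b', hg⟩ := hg
  exact ⟨a + a', b + b', fun z hz => by simp only [hf z hz, hg z hz]; ring⟩

theorem sub (hf : IsAffineOn f s) (hg : IsAffineOn g s) : IsAffineOn (fun z => f z - g z) s := by
  obtain ⟨a, b, hf⟩ := hf
  obtain ⟨a', b', hg⟩ := hg
  exact ⟨a - a', b - b', fun z hz => by simp only [hf z hz, hg z hz]; ring⟩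

theorem const_mul (c : ℝ) (hf : IsAffineOn f s) : IsAffineOn (fun z => c * f z) s := by
  obtain ⟨a, b, hf⟩ := hf
  exact ⟨c * a, c * b, fun z hz => by simp only [hf z hz]; ring⟩

theorem sum {ι : Type*} (u : Finset ι) {F : ι → ℝ → ℝ} (hF : ∀ i ∈ u, IsAffineOn (F i) s) :
    IsAffineOn (fun z => ∑ i ∈ u, F i z) s := by
  classical
  induction u using Finset.induction_on with
  | empty => simpa using const (s := s) 0
  | insert i u hi ih =>
    simp only [Finset.sum_insert hi]
    exact (hF i (mem_insert_self i u)).add (ih fun j hj => hF j (mem_insert_of_mem hj))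

theorem congr (hf : IsAffineOn f s) (h : EqOn f g s) : IsAffineOn g s := by
  obtain ⟨a, b, hf⟩ := hf
  exact ⟨a, b, fun z hz => (h hz).symm.trans (hf z hz)⟩

end IsAffineOn

section ReluInterpolation

variable (q v : ℕ → ℝ)

def segSlope (m : ℕ) : ℝ := (v (m + 1) - v m) / (q (m + 1) - q m)

def slopeChange : ℕ → ℝ
  | 0 => segSlope q v 0
  | m + 1 => segSlope q v (m + 1) - segSlope q v m

/-- The ReLU expansion `v₀ + ∑ₘ cₘ (z - qₘ)₊` of the piecewise linear interpolant of the values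
`v` at the knots `q₀ < q₁ < ⋯ < q_U`: the coefficient `cₘ` is the change of slope at `qₘ`. -/
def reluInterp (U : ℕ) (z : ℝ) : ℝ :=
  v 0 + ∑ m ∈ range U, slopeChange q v m * max (z - q m) 0

variable {q v}

theorem add_sum_slopeChange_mul (hq : StrictMono q) (r : ℕ) (z : ℝ) :
    v 0 + ∑ m ∈ range (r + 1), slopeChange q v m * (z - q m) =
      v r + segSlope q v r * (z - q r) := by
  induction r with
  | zero => simp [slopeChange]
  | succ r ih =>
    have hne : q (r + 1) - q r ≠ 0 := sub_ne_zero.2 (hq r.lt_succ_self).ne'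
    have hstep : segSlope q v r * (q (r + 1) - q r) = v (r + 1) - v r :=
      div_mul_cancel₀ _ hne
    rw [sum_range_succ, ← add_assoc, ih, slopeChange]
    linear_combination hstep

theorem reluInterp_eq (hq : StrictMono q) {U r : ℕ} (hr : r < U) {z : ℝ}
    (hz : z ∈ Icc (q r) (q (r + 1))) :
    reluInterp q v U z = v r + segSlope q v r * (z - q r) := by
  have hterms : ∑ m ∈ range U, slopeChange q v m * max (z - q m) 0 =
      ∑ m ∈ range (r + 1), slopeChange q v m * (z - q m) := by
    rw [← sum_range_add_sum_Ico _ hr, sum_eq_zero (s := Ico _ _), add_zero]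
    · refine sum_congr rfl fun m hm => ?_
      have : q m ≤ q r := hq.monotone (Nat.lt_succ_iff.1 (mem_range.1 hm))
      rw [max_eq_left (by linarith [hz.1])]
    · intro m hm
      have : q (r + 1) ≤ q m := hq.monotone (mem_Ico.1 hm).1
      rw [max_eq_right (by linarith [hz.2]), mul_zero]
  rw [reluInterp, hterms, add_sum_slopeChange_mul hq]

theorem reluInterp_eq_of_isAffineOn (hq : StrictMono q) {U r : ℕ} (hr : r < U) {A : ℝ → ℝ}
    (hA : IsAffineOn A (Icc (q r) (q (r + 1)))) (h₀ : v r = A (q r))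
    (h₁ : v (r + 1) = A (q (r + 1))) {z : ℝ} (hz : z ∈ Icc (q r) (q (r + 1))) :
    reluInterp q v U z = A z := by
  obtain ⟨a, b, hA⟩ := hA
  have hlt := hq r.lt_succ_self
  have hslope : segSlope q v r = a := by
    rw [segSlope, h₀, h₁, hA _ ⟨le_rfl, hlt.le⟩, hA _ ⟨hlt.le, le_rfl⟩,
      div_eq_iff (sub_ne_zero.2 hlt.ne')]
    ring
  rw [reluInterp_eq hq hr hz, hslope, h₀, hA _ ⟨le_rfl, hlt.le⟩, hA z hz]
  ring

variable {δ c : ℝ}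

theorem abs_segSlope_le (hδ : 0 < δ) {m : ℕ} (hgap : δ ≤ q (m + 1) - q m) (hm : |v m| ≤ c)
    (hm' : |v (m + 1)| ≤ c) : |segSlope q v m| ≤ 2 * c / δ := by
  rw [segSlope, abs_div, abs_of_pos (hδ.trans_le hgap)]
  gcongr
  · linarith [abs_nonneg (v m)]
  · calc |v (m + 1) - v m| ≤ |v (m + 1)| + |v m| := abs_sub _ _
      _ ≤ 2 * c := by linarith

theorem abs_slopeChange_le (hδ : 0 < δ) {M : ℕ} (hgap : ∀ m < M, δ ≤ q (m + 1) - q m)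
    (hv : ∀ m ≤ M, |v m| ≤ c) {m : ℕ} (hm : m < M) : |slopeChange q v m| ≤ 4 * c / δ := by
  have hc : 0 ≤ c := (abs_nonneg _).trans (hv 0 (Nat.zero_le M))
  have hslope : ∀ k < M, |segSlope q v k| ≤ 2 * c / δ := fun k hk =>
    abs_segSlope_le hδ (hgap k hk) (hv k hk.le) (hv (k + 1) hk)
  cases m with
  | zero =>
    calc |slopeChange q v 0| ≤ 2 * c / δ := hslope 0 hm
      _ ≤ 4 * c / δ := by gcongr; norm_num
  | succ m =>
    calc |slopeChange q v (m + 1)| ≤ |segSlope q v (m + 1)| + |segSlope q v m| := abs_sub _ _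
      _ ≤ 2 * c / δ + 2 * c / δ := add_le_add (hslope _ hm) (hslope m (by omega))
      _ = 4 * c / δ := by ring

end ReluInterpolation

section NodalHat

variable (X : ℕ → ℝ) (n : ℕ)

def hatRise (z : ℝ) : ℝ := (z - X n) / (X (n + 1) - X n)

def hatFall (z : ℝ) : ℝ := (X (n + 2) - z) / (X (n + 2) - X (n + 1))

def nodalHat (z : ℝ) : ℝ := max (min (hatRise X n z) (hatFall X n z)) 0

theorem isAffineOn_hatRise (s : Set ℝ) : IsAffineOn (hatRise X n) s :=
  .of_forall_eq (1 / (X (n + 1) - X n)) (-X n / (X (n + 1) - X n)) fun z => by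
    rw [hatRise]; ring

theorem isAffineOn_hatFall (s : Set ℝ) : IsAffineOn (hatFall X n) s :=
  .of_forall_eq (-1 / (X (n + 2) - X (n + 1))) (X (n + 2) / (X (n + 2) - X (n + 1))) fun z => by
    rw [hatFall]; ring

variable {X n}

theorem nodalHat_eq_of_le (hX : StrictMono X) {z : ℝ} (hz : z ≤ X (n + 1)) :
    nodalHat X n z = max (hatRise X n z) 0 := by
  have h₁ : 0 < X (n + 1) - X n := sub_pos.2 (hX (by omega))
  have h₂ : 0 < X (n + 2) - X (n + 1) := sub_pos.2 (hX (by omega))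
  have hrise : hatRise X n z ≤ 1 := (div_le_one h₁).2 (by linarith)
  have hfall : 1 ≤ hatFall X n z := (one_le_div h₂).2 (by linarith)
  rw [nodalHat, min_eq_left (hrise.trans hfall)]

theorem nodalHat_eq_of_ge (hX : StrictMono X) {z : ℝ} (hz : X (n + 1) ≤ z) :
    nodalHat X n z = max (hatFall X n z) 0 := by
  have h₁ : 0 < X (n + 1) - X n := sub_pos.2 (hX (by omega))
  have h₂ : 0 < X (n + 2) - X (n + 1) := sub_pos.2 (hX (by omega))
  have hrise : 1 ≤ hatRise X n z := (one_le_div h₁).2 (by linarith)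
  have hfall : hatFall X n z ≤ 1 := (div_le_one h₂).2 (by linarith)
  rw [nodalHat, min_eq_right (hfall.trans hrise)]

theorem nodalHat_eq_zero_of_le (hX : StrictMono X) {z : ℝ} (hz : z ≤ X n) : nodalHat X n z = 0 := by
  rw [nodalHat_eq_of_le hX (hz.trans (hX (by omega)).le), max_eq_right]
  exact div_nonpos_of_nonpos_of_nonneg (by linarith) (sub_pos.2 (hX (by omega))).le

theorem nodalHat_eq_zero_of_ge (hX : StrictMono X) {z : ℝ} (hz : X (n + 2) ≤ z) :
    nodalHat X n z = 0 := by
  rw [nodalHat_eq_of_ge hX ((hX (by omega)).le.trans hz), max_eq_right]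
  exact div_nonpos_of_nonpos_of_nonneg (by linarith) (sub_pos.2 (hX (by omega))).le

theorem nodalHat_apply_node (hX : StrictMono X) (t : ℕ) :
    nodalHat X n (X t) = if t = n + 1 then 1 else 0 := by
  rcases lt_trichotomy t (n + 1) with ht | rfl | ht
  · rw [if_neg ht.ne, nodalHat_eq_zero_of_le hX (hX.monotone (by omega))]
  · rw [if_pos rfl, nodalHat_eq_of_le hX le_rfl, hatRise,
      div_self (sub_pos.2 (hX (by omega))).ne', max_eq_left zero_le_one]
  · rw [if_neg ht.ne', nodalHat_eq_zero_of_ge hX (hX.monotone (by omega))]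

theorem isAffineOn_nodalHat (hX : StrictMono X) (t : ℕ) :
    IsAffineOn (nodalHat X n) (Icc (X t) (X (t + 1))) := by
  rcases lt_trichotomy t n with ht | rfl | ht
  · refine (IsAffineOn.const 0).congr fun z hz => ?_
    exact (nodalHat_eq_zero_of_le hX (hz.2.trans (hX.monotone (by omega)))).symm
  · refine (isAffineOn_hatRise X t _).congr fun z hz => ?_
    rw [nodalHat_eq_of_le hX hz.2, max_eq_left]
    exact div_nonneg (by linarith [hz.1]) (sub_pos.2 (hX (by omega))).le
  · obtain rfl | ht := (Nat.succ_le_of_lt ht).eq_or_lt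
    · refine (isAffineOn_hatFall X n _).congr fun z hz => ?_
      rw [nodalHat_eq_of_ge hX hz.1, max_eq_left]
      exact div_nonneg (by linarith [hz.2]) (sub_pos.2 (hX (by omega))).le
    · refine (IsAffineOn.const 0).congr fun z hz => ?_
      exact (nodalHat_eq_zero_of_ge hX ((hX.monotone (by omega)).trans hz.1)).symm

end NodalHat

theorem max_two_mul_max_sub_four_mul_max {c : ℝ} (hc : 0 ≤ c) (a b : ℝ) :
    max (2 * max (c / 2 * a) 0 - 4 * max (c / 4 * (a - b)) 0) 0 = c * max (min a b) 0 := by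
  have h₂ : 2 * max (c / 2 * a) 0 = max (c * a) 0 := by
    rw [mul_max_of_nonneg _ _ zero_le_two]; ring_nf
  have h₄ : 4 * max (c / 4 * (a - b)) 0 = max (c * a - c * b) 0 := by
    rw [mul_max_of_nonneg _ _ zero_le_four]; ring_nf
  rw [h₂, h₄, mul_max_of_nonneg _ _ hc, mul_min_of_nonneg _ _ hc, mul_zero]
  generalize c * a = A, c * b = B
  rcases le_total A B with h | h <;> rcases le_total A 0 with h' | h'
  all_goals simp [h, h', sub_nonpos.2]
  linarith

section HatInterpolation

variable (X Y : ℕ → ℝ) (n L : ℕ)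

def secant (z : ℝ) : ℝ := Y n + (Y (n + L) - Y n) / (X (n + L) - X n) * (z - X n)

def secantResidual (i : ℕ) : ℝ := Y i - secant X Y n L (X i)

def hatInterp (z : ℝ) : ℝ :=
  secant X Y n L z + ∑ k ∈ range (L - 1), secantResidual X Y n L (n + k + 1) * nodalHat X (n + k) z

theorem isAffineOn_secant (s : Set ℝ) : IsAffineOn (secant X Y n L) s :=
  .of_forall_eq ((Y (n + L) - Y n) / (X (n + L) - X n))
    (Y n - (Y (n + L) - Y n) / (X (n + L) - X n) * X n) fun z => by rw [secant]; ring

variable {X Y n L}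

theorem secant_mem_Icc (hX : X n < X (n + L)) (hY₀ : Y n ∈ Icc (0 : ℝ) 1)
    (hY₁ : Y (n + L) ∈ Icc (0 : ℝ) 1) {z : ℝ} (hz : z ∈ Icc (X n) (X (n + L))) :
    secant X Y n L z ∈ Icc (0 : ℝ) 1 := by
  set t := (z - X n) / (X (n + L) - X n)
  have hd : 0 < X (n + L) - X n := sub_pos.2 hX
  have ht₀ : 0 ≤ t := div_nonneg (by linarith [hz.1]) hd.le
  have ht₁ : t ≤ 1 := (div_le_one hd).2 (by linarith [hz.2])
  have h : secant X Y n L z = (1 - t) * Y n + t * Y (n + L) := by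
    rw [secant, div_mul_eq_mul_div, mul_div_assoc]; ring
  rw [h]
  constructor <;> nlinarith [hY₀.1, hY₀.2, hY₁.1, hY₁.2]

theorem hatInterp_apply_node (hX : StrictMono X) {t : ℕ} (ht : t ≤ L) :
    hatInterp X Y n L (X (n + t)) = Y (n + t) := by
  simp_rw [hatInterp, nodalHat_apply_node hX, mul_ite, mul_one, mul_zero]
  by_cases hint : 0 < t ∧ t < L
  · rw [sum_eq_single (t - 1) (fun k _ hk => if_neg (by omega)) (fun h => absurd
      (Finset.mem_range.2 (by omega)) h), if_pos (by omega), show n + (t - 1) + 1 = n + t by omega,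
      secantResidual]
    ring
  · rw [sum_eq_zero fun k hk => if_neg (by have := Finset.mem_range.1 hk; omega), add_zero]
    rcases Nat.eq_zero_or_pos t with rfl | ht₀
    · simp [secant]
    · obtain rfl : t = L := by omega
      rw [secant, div_mul_cancel₀ _ (sub_ne_zero.2 (hX (by omega)).ne')]; ring

theorem isAffineOn_hatInterp (hX : StrictMono X) (s : ℕ) :
    IsAffineOn (hatInterp X Y n L) (Icc (X s) (X (s + 1))) :=
  (isAffineOn_secant X Y n L _).add
    (.sum _ fun _ _ => (isAffineOn_nodalHat hX s).const_mul _)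

end HatInterpolation

section Sequences

variable {X : ℕ → ℝ} {δ : ℝ}

theorem strictMono_of_add_le_succ (hδ : 0 < δ) (hsep : ∀ i, X i + δ ≤ X (i + 1)) :
    StrictMono X :=
  strictMono_nat_of_lt_succ fun i => by linarith [hsep i]

theorem add_le_of_lt_of_add_le_succ (hδ : 0 < δ) (hsep : ∀ i, X i + δ ≤ X (i + 1)) {a b : ℕ}
    (hab : a < b) : X a + δ ≤ X b :=
  (hsep a).trans ((strictMono_of_add_le_succ hδ hsep).monotone hab)

theorem abs_sub_div_le_inv {a b d : ℝ} (hδ : 0 < δ) (ha : a ∈ Icc (0 : ℝ) 1)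
    (hb : b ∈ Icc (0 : ℝ) 1) (hd : δ ≤ d) : |(a - b) / d| ≤ 1 / δ := by
  rw [abs_div, abs_of_pos (hδ.trans_le hd)]
  exact div_le_div₀ zero_le_one
    (abs_sub_le_iff.2 ⟨by linarith [ha.2, hb.1], by linarith [ha.1, hb.2]⟩) hδ hd

theorem exists_extension_add_le_succ {N : ℕ} (hN : 0 < N) {δ : ℝ} (x : Fin N → ℝ)
    (hsep : ∀ i j : Fin N, (i : ℕ) + 1 = j → x i + δ ≤ x j) :
    ∃ X : ℕ → ℝ, (∀ i : Fin N, X i = x i) ∧ ∀ n, X n + δ ≤ X (n + 1) := by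
  refine ⟨fun n => x ⟨min n (N - 1), by omega⟩ + δ * ↑(n - (N - 1)), fun i => ?_, fun n => ?_⟩
  · simp [show min (i : ℕ) (N - 1) = i by omega, show (i : ℕ) - (N - 1) = 0 by omega]
  · rcases lt_or_ge (n + 1) N with h | h
    · simpa [show min n (N - 1) = n by omega, show min (n + 1) (N - 1) = n + 1 by omega,
        show n - (N - 1) = 0 by omega, show n + 1 - (N - 1) = 0 by omega]
        using hsep ⟨n, by omega⟩ ⟨n + 1, h⟩ rfl
    · simp only [show min n (N - 1) = N - 1 by omega, show min (n + 1) (N - 1) = N - 1 by omega,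
        show n + 1 - (N - 1) = n - (N - 1) + 1 by omega]
      push_cast
      linarith

theorem exists_extension_mem {N : ℕ} {s : Set ℝ} {c : ℝ} (hc : c ∈ s) (y : Fin N → ℝ)
    (hy : ∀ i, y i ∈ s) : ∃ Y : ℕ → ℝ, (∀ i : Fin N, Y i = y i) ∧ ∀ n, Y n ∈ s :=
  ⟨fun n => if h : n < N then y ⟨n, h⟩ else c, fun i => by simp,
    fun n => by dsimp only; split_ifs <;> simp [hy, hc]⟩

theorem exists_eq_mul_add_of_lt_mul {N₁ N₂ i : ℕ} (hi : i < N₁ * N₂) :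
    ∃ j < N₁, ∃ t < N₂, i = j * N₂ + t :=
  ⟨i / N₂, Nat.div_lt_of_lt_mul (by rwa [mul_comm]), i % N₂,
    Nat.mod_lt _ (Nat.pos_of_mul_pos_left (i.zero_le.trans_lt hi)), (Nat.div_add_mod' i N₂).symm⟩

theorem mul_add_lt_mul {N₁ N₂ j t : ℕ} (hj : j < N₁) (ht : t < N₂) : j * N₂ + t < N₁ * N₂ :=
  calc j * N₂ + t < (j + 1) * N₂ := by rw [add_mul, one_mul]; omega
    _ ≤ N₁ * N₂ := Nat.mul_le_mul_right _ hj

end Sequences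

section LabelledLayers

variable {α β : Type*} [Fintype α] [Fintype β] {m n : ℕ}

/-- Units of a layer of width `m` labelled by `α`, the remaining `m - card α` units idle. -/
def padEquiv (α : Type*) [Fintype α] (m : ℕ) (h : Fintype.card α ≤ m) :
    α ⊕ Fin (m - Fintype.card α) ≃ Fin m :=
  Fintype.equivFinOfCardEq (by rw [Fintype.card_sum, Fintype.card_fin]; omega)

def Layer.ofLabels (hα : Fintype.card α ≤ m) (hβ : Fintype.card β ≤ n) (W : β → α → ℝ)
    (b : β → ℝ) : Layer m n where
  W i j := Sum.elim (fun c => Sum.elim (W c) 0 ((padEquiv α m hα).symm j)) 0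
    ((padEquiv β n hβ).symm i)
  b i := Sum.elim b 0 ((padEquiv β n hβ).symm i)

variable {hα : Fintype.card α ≤ m} {hβ : Fintype.card β ≤ n} {W : β → α → ℝ} {b : β → ℝ}

theorem Layer.ofLabels_apply (x : Fin m → ℝ) (c : β) :
    (Layer.ofLabels hα hβ W b).apply x (padEquiv β n hβ (.inl c)) =
      ∑ a, W c a * x (padEquiv α m hα (.inl a)) + b c := by
  simp only [Layer.apply, Layer.ofLabels, Equiv.symm_apply_apply, Sum.elim_inl]
  rw [← (padEquiv α m hα).sum_comp, Fintype.sum_sum_type]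
  simp

theorem nnnorm_le_ofReal {w B : ℝ} (h : |w| ≤ B) : (‖w‖₊ : ℝ≥0∞) ≤ ENNReal.ofReal B := by
  rw [← ENNReal.ofReal_coe_nnreal, coe_nnnorm, Real.norm_eq_abs]
  exact ENNReal.ofReal_le_ofReal h

theorem Layer.ofLabels_bounded {B : ℝ} (hW : ∀ c a, |W c a| ≤ B) (hb : ∀ c, |b c| ≤ B) :
    (Layer.ofLabels hα hβ W b).Bounded (ENNReal.ofReal B) := by
  refine ⟨fun i j => ?_, fun i => ?_⟩
  · simp only [Layer.ofLabels]
    rcases (padEquiv β n hβ).symm i with c | _ <;> [rcases (padEquiv α m hα).symm j with a | _;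
      skip] <;> simp [nnnorm_le_ofReal (hW _ _)]
  · simp only [Layer.ofLabels]
    rcases (padEquiv β n hβ).symm i with c | _ <;> simp [nnnorm_le_ofReal (hb _)]

theorem Layer.Bounded.mono {A : Layer m n} {B C : ℝ≥0∞} (h : A.Bounded B) (hBC : B ≤ C) :
    A.Bounded C :=
  ⟨fun i j => (h.1 i j).trans hBC, fun i => (h.2 i).trans hBC⟩

end LabelledLayers

section FittingNetwork

variable (N₁ N₂ : ℕ) (X Y : ℕ → ℝ)

/-- Index of the `m`-th knot: knots `2j` and `2j + 1` are the first and the last point of the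
`j`-th block of `N₂` points. -/
def knotIdx (m : ℕ) : ℕ := m / 2 * N₂ + m % 2 * (N₂ - 1)

/-- A hat label `(k, ε)` stands for the hat of the interior node `k + 1` of a block, weighted by
the positive (`ε = true`) or the negative part of the residual there. -/
def hatAmp (j : ℕ) (c : Fin (N₂ - 2) × Bool) : ℝ :=
  if c.2 then (secantResidual X Y (j * N₂) (N₂ - 1) (j * N₂ + c.1 + 1))⁺
  else (secantResidual X Y (j * N₂) (N₂ - 1) (j * N₂ + c.1 + 1))⁻

/-- The affine function computed on block `j` by the second-layer unit `ℓ`. The factors `1/2` and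
`1/4` keep its knot values below `1/δ`; the third layer undoes them with weights `2` and `-4`. -/
def blockTarget : Option ((Fin (N₂ - 2) × Bool) × Bool) → ℕ → ℝ → ℝ
  | none, j, z => secant X Y (j * N₂) (N₂ - 1) z
  | some (c, false), j, z => hatAmp N₂ X Y j c / 2 * hatRise X (j * N₂ + c.1) z
  | some (c, true), j, z =>
    hatAmp N₂ X Y j c / 4 * (hatRise X (j * N₂ + c.1) z - hatFall X (j * N₂ + c.1) z)

def knotValue (ℓ : Option ((Fin (N₂ - 2) × Bool) × Bool)) (m : ℕ) : ℝ :=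
  blockTarget N₂ X Y ℓ (m / 2) (X (knotIdx N₂ m))

def weight₃ : Option (Fin (N₂ - 2) × Bool) → Option ((Fin (N₂ - 2) × Bool) × Bool) → ℝ
  | none, none => 1
  | some c, some (c', b) => if c' = c then (if b then -4 else 2) else 0
  | _, _ => 0

def weight₄ : Option (Fin (N₂ - 2) × Bool) → ℝ
  | none => 1
  | some c => if c.2 then 1 else -1

theorem card_label₂_le :
    Fintype.card (Option ((Fin (N₂ - 2) × Bool) × Bool)) ≤ 4 * (N₂ - 2) + 2 := by
  simp only [Fintype.card_option, Fintype.card_prod, Fintype.card_fin, Fintype.card_bool]; omega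

theorem card_label₃_le : Fintype.card (Option (Fin (N₂ - 2) × Bool)) ≤ 8 * (N₂ - 2) + 2 := by
  simp only [Fintype.card_option, Fintype.card_prod, Fintype.card_fin, Fintype.card_bool]; omega

def fitLayer₁ : Layer 1 (2 * N₁ - 1) :=
  Layer.ofLabels (α := Unit) (by simp) (by simp) (fun _ _ => 1)
    fun m : Fin (2 * N₁ - 1) => -X (knotIdx N₂ m)

def fitLayer₂ : Layer (2 * N₁ - 1) (4 * (N₂ - 2) + 2) :=
  Layer.ofLabels (by simp) (card_label₂_le N₂)
    (fun ℓ (m : Fin (2 * N₁ - 1)) => slopeChange (X ∘ knotIdx N₂) (knotValue N₂ X Y ℓ) m)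
    fun ℓ => knotValue N₂ X Y ℓ 0

def fitLayer₃ : Layer (4 * (N₂ - 2) + 2) (8 * (N₂ - 2) + 2) :=
  Layer.ofLabels (card_label₂_le N₂) (card_label₃_le N₂) (weight₃ N₂) 0

def fitLayer₄ : Layer (8 * (N₂ - 2) + 2) 1 :=
  Layer.ofLabels (β := Unit) (card_label₃_le N₂) (by simp) (fun _ => weight₄ N₂) 0

def fitNet (z : ℝ) : ℝ :=
  ∑ c, weight₄ N₂ c * max (∑ ℓ, weight₃ N₂ c ℓ *
    max (reluInterp (X ∘ knotIdx N₂) (knotValue N₂ X Y ℓ) (2 * N₁ - 1) z) 0) 0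

theorem fitLayers_apply (z : ℝ) :
    (fitLayer₄ N₂).apply (reluVec ((fitLayer₃ N₂).apply (reluVec ((fitLayer₂ N₁ N₂ X Y).apply
      (reluVec ((fitLayer₁ N₁ N₂ X).apply fun _ => z)))))) 0 = fitNet N₁ N₂ X Y z := by
  rw [show (0 : Fin 1) = padEquiv Unit 1 (by simp) (.inl ()) from Subsingleton.elim _ _]
  simp only [fitLayer₄, fitLayer₃, fitLayer₂, fitLayer₁, Layer.ofLabels_apply, reluVec,
    Fintype.sum_unique, one_mul, Pi.zero_apply, add_zero, fitNet, reluInterp]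
  refine sum_congr rfl fun c _ => congrArg _ (congrArg (max · 0) (sum_congr rfl fun ℓ _ => ?_))
  rw [← Fin.sum_univ_eq_sum_range (fun m => slopeChange _ _ m * max (z - (X ∘ knotIdx N₂) m) 0),
    add_comm]
  simp [sub_eq_add_neg]

end FittingNetwork

section FittingNetworkOnBlocks

variable {N₁ N₂ : ℕ} {X Y : ℕ → ℝ}

theorem knotIdx_two_mul (j : ℕ) : knotIdx N₂ (2 * j) = j * N₂ := by
  simp [knotIdx]

theorem knotIdx_two_mul_add_one (j : ℕ) : knotIdx N₂ (2 * j + 1) = j * N₂ + (N₂ - 1) := by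
  rw [knotIdx, show (2 * j + 1) / 2 = j by omega, show (2 * j + 1) % 2 = 1 by omega, one_mul]

theorem knotIdx_strictMono (hN₂ : 2 ≤ N₂) : StrictMono (knotIdx N₂) := by
  refine strictMono_nat_of_lt_succ fun m => ?_
  obtain ⟨j, rfl | rfl⟩ := Nat.even_or_odd' m
  · rw [knotIdx_two_mul, knotIdx_two_mul_add_one]; omega
  · rw [show 2 * j + 1 + 1 = 2 * (j + 1) by ring, knotIdx_two_mul, knotIdx_two_mul_add_one,
      add_mul]
    omega

theorem knotIdx_mem_Icc (m : ℕ) :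
    knotIdx N₂ m ∈ Set.Icc (m / 2 * N₂) (m / 2 * N₂ + (N₂ - 1)) := by
  have : m % 2 * (N₂ - 1) ≤ N₂ - 1 := mul_le_of_le_one_left (Nat.zero_le _) (by omega)
  rw [knotIdx]
  constructor <;> omega

theorem knotIdx_lt (hN₂ : 0 < N₂) {m : ℕ} (hm : m < 2 * N₁) : knotIdx N₂ m < N₁ * N₂ :=
  (knotIdx_mem_Icc m).2.trans_lt (mul_add_lt_mul (by omega) (by omega))

theorem hatAmp_nonneg (j : ℕ) (c : Fin (N₂ - 2) × Bool) : 0 ≤ hatAmp N₂ X Y j c := by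
  unfold hatAmp; split_ifs
  exacts [posPart_nonneg _, negPart_nonneg _]

theorem isAffineOn_blockTarget (ℓ : Option ((Fin (N₂ - 2) × Bool) × Bool)) (j : ℕ)
    (s : Set ℝ) : IsAffineOn (blockTarget N₂ X Y ℓ j) s := by
  rcases ℓ with _ | ⟨c, _ | _⟩
  · exact isAffineOn_secant X Y _ _ s
  · exact (isAffineOn_hatRise X _ s).const_mul _
  · exact ((isAffineOn_hatRise X _ s).sub (isAffineOn_hatFall X _ s)).const_mul _

theorem reluInterp_knotValue (hX : StrictMono X) (hN₂ : 2 ≤ N₂) {j : ℕ} (hj : j < N₁) {z : ℝ}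
    (hz : z ∈ Icc (X (j * N₂)) (X (j * N₂ + (N₂ - 1))))
    (ℓ : Option ((Fin (N₂ - 2) × Bool) × Bool)) :
    reluInterp (X ∘ knotIdx N₂) (knotValue N₂ X Y ℓ) (2 * N₁ - 1) z = blockTarget N₂ X Y ℓ j z := by
  have hval : ∀ i < 2, knotValue N₂ X Y ℓ (2 * j + i) = blockTarget N₂ X Y ℓ j
      (X (knotIdx N₂ (2 * j + i))) := fun i hi => by
    rw [knotValue, show (2 * j + i) / 2 = j by omega]
  refine reluInterp_eq_of_isAffineOn (hX.comp (knotIdx_strictMono hN₂)) (r := 2 * j) (by omega)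
    (isAffineOn_blockTarget ℓ j _) (hval 0 two_pos) (hval 1 one_lt_two) ?_
  simpa [knotIdx_two_mul, knotIdx_two_mul_add_one] using hz

theorem fitNet_eq_hatInterp (hX : StrictMono X) (hY : ∀ i, Y i ∈ Icc (0 : ℝ) 1) (hN₂ : 2 ≤ N₂)
    {j : ℕ} (hj : j < N₁) {z : ℝ} (hz : z ∈ Icc (X (j * N₂)) (X (j * N₂ + (N₂ - 1)))) :
    fitNet N₁ N₂ X Y z = hatInterp X Y (j * N₂) (N₂ - 1) z := by
  have hsecant : 0 ≤ secant X Y (j * N₂) (N₂ - 1) z :=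
    (secant_mem_Icc (hX (by omega)) (hY _) (hY _) hz).1
  have hsecant_unit : ∑ ℓ, weight₃ N₂ none ℓ * max (blockTarget N₂ X Y ℓ j z) 0 =
      secant X Y (j * N₂) (N₂ - 1) z := by
    simp [Fintype.sum_option, weight₃, blockTarget, hsecant]
  have hhat_unit (c : Fin (N₂ - 2) × Bool) :
      max (∑ ℓ, weight₃ N₂ (some c) ℓ * max (blockTarget N₂ X Y ℓ j z) 0) 0 =
        hatAmp N₂ X Y j c * nodalHat X (j * N₂ + c.1) z := by
    rw [Fintype.sum_option, Fintype.sum_prod_type]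
    simp only [weight₃, ite_mul, zero_mul, zero_add, Fintype.sum_bool, sum_add_distrib,
      sum_ite_eq', Finset.mem_univ, if_true, Bool.false_eq_true, if_false, blockTarget]
    rw [nodalHat, ← max_two_mul_max_sub_four_mul_max (hatAmp_nonneg j c)]
    ring_nf
  rw [fitNet, Fintype.sum_option]
  simp only [reluInterp_knotValue hX hN₂ hj hz, hsecant_unit, hhat_unit, weight₄,
    max_eq_left hsecant, one_mul, Fintype.sum_prod_type, Fintype.sum_bool, hatAmp, if_true,
    Bool.false_eq_true, if_false]
  rw [hatInterp, show N₂ - 1 - 1 = N₂ - 2 by omega, ← Fin.sum_univ_eq_sum_range]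
  refine congrArg _ (sum_congr rfl fun k _ => ?_)
  linear_combination nodalHat X (j * N₂ + k) z *
    posPart_sub_negPart (secantResidual X Y (j * N₂) (N₂ - 1) (j * N₂ + k + 1))

theorem fitNet_apply_node (hX : StrictMono X) (hY : ∀ i, Y i ∈ Icc (0 : ℝ) 1) (hN₂ : 2 ≤ N₂)
    {i : ℕ} (hi : i < N₁ * N₂) : fitNet N₁ N₂ X Y (X i) = Y i := by
  obtain ⟨j, hj, t, ht, rfl⟩ := exists_eq_mul_add_of_lt_mul hi
  rw [fitNet_eq_hatInterp hX hY hN₂ hj ⟨hX.monotone (by omega), hX.monotone (by omega)⟩,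
    hatInterp_apply_node hX (by omega)]

theorem isAffineOn_fitNet (hX : StrictMono X) (hY : ∀ i, Y i ∈ Icc (0 : ℝ) 1) (hN₂ : 2 ≤ N₂)
    {i : ℕ} (hi : i + 1 < N₁ * N₂) (hblock : ∀ k, 1 ≤ k → k < N₁ → i + 1 ≠ k * N₂) :
    IsAffineOn (fitNet N₁ N₂ X Y) (Icc (X i) (X (i + 1))) := by
  obtain ⟨j, hj, t, ht, rfl⟩ := exists_eq_mul_add_of_lt_mul (i.lt_succ_self.trans hi)
  have ht' : t + 1 < N₂ := by
    by_contra h'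
    have h : j * N₂ + t + 1 = (j + 1) * N₂ := by rw [add_mul, one_mul]; omega
    exact hblock (j + 1) (by omega) (Nat.lt_of_mul_lt_mul_right (h ▸ hi)) h
  refine (isAffineOn_hatInterp (Y := Y) (n := j * N₂) (L := N₂ - 1) hX _).congr fun z hz => ?_
  exact (fitNet_eq_hatInterp hX hY hN₂ hj
    ⟨(hX.monotone (by omega)).trans hz.1, hz.2.trans (hX.monotone (by omega))⟩).symm

end FittingNetworkOnBlocks

section FittingNetworkBounds

variable {N₁ N₂ : ℕ} {X Y : ℕ → ℝ} {δ : ℝ}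

theorem hatAmp_le_one (hX : StrictMono X) (hY : ∀ i, Y i ∈ Icc (0 : ℝ) 1) (hN₂ : 2 ≤ N₂)
    (j : ℕ) (c : Fin (N₂ - 2) × Bool) : hatAmp N₂ X Y j c ≤ 1 := by
  have hk := c.1.isLt
  have hs := secant_mem_Icc (X := X) (n := j * N₂) (L := N₂ - 1) (hX (by omega)) (hY _) (hY _)
    (z := X (j * N₂ + c.1 + 1)) ⟨hX.monotone (by omega), hX.monotone (by omega)⟩
  have hy := hY (j * N₂ + c.1 + 1)
  unfold hatAmp secantResidual
  split_ifs
  · exact max_le (by linarith [hs.1, hy.2]) zero_le_one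
  · exact max_le (by linarith [hs.2, hy.1]) zero_le_one

theorem abs_blockTarget_le (hδ : 0 < δ) (hδ₁ : δ ≤ 1) (hsep : ∀ i, X i + δ ≤ X (i + 1))
    (hXmem : ∀ i < N₁ * N₂, X i ∈ Icc (0 : ℝ) 1) (hY : ∀ i, Y i ∈ Icc (0 : ℝ) 1) (hN₂ : 2 ≤ N₂)
    (ℓ : Option ((Fin (N₂ - 2) × Bool) × Bool)) {j : ℕ} (hj : j < N₁) {z : ℝ}
    (hz : z ∈ Icc (X (j * N₂)) (X (j * N₂ + (N₂ - 1)))) :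
    |blockTarget N₂ X Y ℓ j z| ≤ 1 / δ := by
  have hX := strictMono_of_add_le_succ hδ hsep
  have hmem (t : ℕ) (ht : t < N₂) : X (j * N₂ + t) ∈ Icc (0 : ℝ) 1 :=
    hXmem _ (mul_add_lt_mul hj ht)
  have hz₀₁ : z ∈ Icc (0 : ℝ) 1 :=
    ⟨(by simpa using (hmem 0 (by omega)).1 : (0 : ℝ) ≤ X (j * N₂)).trans hz.1,
      hz.2.trans (hmem _ (by omega)).2⟩
  have hone : 1 ≤ 1 / δ := by rw [le_div_iff₀ hδ]; linarith
  rcases ℓ with _ | ⟨c, b⟩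
  · have hs := secant_mem_Icc (hX (by omega)) (hY _) (hY _) hz
    exact (abs_le.2 ⟨by linarith [hs.1], hs.2⟩).trans hone
  have hk := c.1.isLt
  have ha : |hatAmp N₂ X Y j c| ≤ 1 :=
    abs_le.2 ⟨by linarith [hatAmp_nonneg (X := X) (Y := Y) j c], hatAmp_le_one hX hY hN₂ j c⟩
  have hR : |hatRise X (j * N₂ + c.1) z| ≤ 1 / δ :=
    abs_sub_div_le_inv hδ hz₀₁ (hmem _ (by omega)) (by linarith [hsep (j * N₂ + c.1)])
  have hF : |hatFall X (j * N₂ + c.1) z| ≤ 1 / δ :=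
    abs_sub_div_le_inv hδ (hmem (c.1 + 2) (by omega)) hz₀₁
      (by linarith [hsep (j * N₂ + c.1 + 1)])
  have hδ' : 0 ≤ 1 / δ := by positivity
  cases b
  · rw [blockTarget, abs_mul, abs_div, abs_two]
    nlinarith [abs_nonneg (hatAmp N₂ X Y j c)]
  · rw [blockTarget, abs_mul, abs_div, abs_of_pos (four_pos : (0 : ℝ) < 4)]
    have := abs_sub (hatRise X (j * N₂ + c.1) z) (hatFall X (j * N₂ + c.1) z)
    nlinarith [abs_nonneg (hatAmp N₂ X Y j c)]

theorem abs_knotValue_le (hδ : 0 < δ) (hδ₁ : δ ≤ 1) (hsep : ∀ i, X i + δ ≤ X (i + 1))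
    (hXmem : ∀ i < N₁ * N₂, X i ∈ Icc (0 : ℝ) 1) (hY : ∀ i, Y i ∈ Icc (0 : ℝ) 1) (hN₂ : 2 ≤ N₂)
    (ℓ : Option ((Fin (N₂ - 2) × Bool) × Bool)) {m : ℕ} (hm : m < 2 * N₁) :
    |knotValue N₂ X Y ℓ m| ≤ 1 / δ :=
  have hX := (strictMono_of_add_le_succ hδ hsep).monotone
  abs_blockTarget_le hδ hδ₁ hsep hXmem hY hN₂ ℓ (by omega)
    ⟨hX (knotIdx_mem_Icc m).1, hX (knotIdx_mem_Icc m).2⟩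

theorem fitLayer₁_bounded (hXmem : ∀ i < N₁ * N₂, X i ∈ Icc (0 : ℝ) 1) (hN₂ : 0 < N₂) :
    (fitLayer₁ N₁ N₂ X).Bounded 1 := by
  rw [← ENNReal.ofReal_one]
  refine Layer.ofLabels_bounded (fun _ _ => by simp) fun m => ?_
  have h := hXmem _ (knotIdx_lt hN₂ (by omega : (m : ℕ) < 2 * N₁))
  rw [abs_neg]
  exact abs_le.2 ⟨by linarith [h.1], h.2⟩

theorem fitLayer₂_bounded (hN₁ : 0 < N₁) (hN₂ : 2 ≤ N₂) (hδ : 0 < δ) (hδ₁ : δ ≤ 1)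
    (hsep : ∀ i, X i + δ ≤ X (i + 1)) (hXmem : ∀ i < N₁ * N₂, X i ∈ Icc (0 : ℝ) 1)
    (hY : ∀ i, Y i ∈ Icc (0 : ℝ) 1) :
    (fitLayer₂ N₁ N₂ X Y).Bounded (ENNReal.ofReal (4 / δ ^ 2)) := by
  have hv ℓ m (hm : m ≤ 2 * N₁ - 1) := abs_knotValue_le hδ hδ₁ hsep hXmem hY hN₂ ℓ
    (by omega : m < 2 * N₁)
  have hgap (m : ℕ) (_ : m < 2 * N₁ - 1) : δ ≤ X (knotIdx N₂ (m + 1)) - X (knotIdx N₂ m) := by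
    linarith [add_le_of_lt_of_add_le_succ hδ hsep (knotIdx_strictMono hN₂ m.lt_succ_self)]
  have hinv : 1 / δ ≤ 4 / δ ^ 2 := by
    rw [div_le_div_iff₀ hδ (by positivity)]; nlinarith
  refine Layer.ofLabels_bounded (fun ℓ m => ?_) fun ℓ => (hv ℓ 0 (Nat.zero_le _)).trans hinv
  calc |slopeChange (X ∘ knotIdx N₂) (knotValue N₂ X Y ℓ) m| ≤ 4 * (1 / δ) / δ :=
        abs_slopeChange_le hδ hgap (hv ℓ) m.isLt
    _ = 4 / δ ^ 2 := by ring

theorem fitLayer₃_bounded (hδ : 0 < δ) (hδ₁ : δ ≤ 1) :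
    (fitLayer₃ N₂).Bounded (ENNReal.ofReal (4 / δ ^ 2)) := by
  have h4 : (4 : ℝ) ≤ 4 / δ ^ 2 := by rw [le_div_iff₀ (by positivity)]; nlinarith
  refine Layer.ofLabels_bounded (fun c ℓ => ?_) fun _ => by
    simp only [Pi.zero_apply, abs_zero]; positivity
  refine le_trans ?_ h4
  rcases c with _ | c <;> rcases ℓ with _ | ⟨c', _ | _⟩ <;> simp only [weight₃] <;> try split_ifs
  all_goals norm_num

theorem fitLayer₄_bounded : (fitLayer₄ N₂).Bounded 1 := by
  rw [← ENNReal.ofReal_one]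
  refine Layer.ofLabels_bounded (fun _ c => ?_) fun _ => by simp
  rcases c with _ | ⟨_, _ | _⟩ <;> simp [weight₄]

end FittingNetworkBounds

end

/-- 1-D point fitting by a 3-hidden-layer ReLU network.
Given `N₁, N₂ ≥ 2`, `δ > 0` and points `{(x_i, y_i)}_{i=0}^{N₁N₂-1} ⊆ [0,1]²` with consecutive
`x`'s at least `δ` apart, there is a ReLU network with layer widths
`(1, 2N₁-1, 4(N₂-2)+2, 8(N₂-2)+2, 1)`, all weights bounded by `4/δ²` (first and last affine
layers bounded by `1`), interpolating all points and linear on `[x_{i-1}, x_i]`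
whenever `i ∉ {jN₂ : 1 ≤ j ≤ N₁-1}`. -/
theorem stmt18_point_fitting_1d (N₁ N₂ : ℕ) (hN₁ : 2 ≤ N₁) (hN₂ : 2 ≤ N₂)
    (δ : ℝ) (hδ : 0 < δ)
    (x y : Fin (N₁ * N₂) → ℝ)
    (hx : ∀ i, x i ∈ Set.Icc (0 : ℝ) 1) (hy : ∀ i, y i ∈ Set.Icc (0 : ℝ) 1)
    (hsep : ∀ i j : Fin (N₁ * N₂), (i : ℕ) + 1 = (j : ℕ) → x i + δ ≤ x j) :
    ∃ (A₁ : Layer 1 (2 * N₁ - 1)) (A₂ : Layer (2 * N₁ - 1) (4 * (N₂ - 2) + 2))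
      (A₃ : Layer (4 * (N₂ - 2) + 2) (8 * (N₂ - 2) + 2)) (A₄ : Layer (8 * (N₂ - 2) + 2) 1),
      A₁.Bounded (ENNReal.ofReal (4 / δ ^ 2)) ∧ A₂.Bounded (ENNReal.ofReal (4 / δ ^ 2)) ∧
      A₃.Bounded (ENNReal.ofReal (4 / δ ^ 2)) ∧ A₄.Bounded (ENNReal.ofReal (4 / δ ^ 2)) ∧
      A₁.Bounded 1 ∧ A₄.Bounded 1 ∧
      ∀ gdag : ℝ → ℝ,
        (∀ z : ℝ, gdag z =
          A₄.apply (reluVec (A₃.apply (reluVec (A₂.apply (reluVec (A₁.apply fun _ => z)))))) 0) →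
        (∀ i, gdag (x i) = y i) ∧
        (∀ i j : Fin (N₁ * N₂), (i : ℕ) + 1 = (j : ℕ) →
          (¬ ∃ k : ℕ, 1 ≤ k ∧ k ≤ N₁ - 1 ∧ (j : ℕ) = k * N₂) →
          ∃ a b : ℝ, ∀ z ∈ Set.Icc (x i) (x j), gdag z = a * z + b) := by
  have hN : 4 ≤ N₁ * N₂ := Nat.mul_le_mul hN₁ hN₂
  obtain ⟨X, hXx, hXsep⟩ := exists_extension_add_le_succ (by omega) x hsep
  obtain ⟨Y, hYy, hY⟩ := exists_extension_mem (by simp : (0 : ℝ) ∈ Icc (0 : ℝ) 1) y hy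
  have hX := strictMono_of_add_le_succ hδ hXsep
  have hXmem (i : ℕ) (hi : i < N₁ * N₂) : X i ∈ Icc (0 : ℝ) 1 := hXx ⟨i, hi⟩ ▸ hx _
  have hδ₁ : δ ≤ 1 := by linarith [hXsep 0, (hXmem 0 (by omega)).1, (hXmem 1 (by omega)).2]
  have h₁ : (1 : ℝ≥0∞) ≤ ENNReal.ofReal (4 / δ ^ 2) := by
    rw [← ENNReal.ofReal_one]
    exact ENNReal.ofReal_le_ofReal (by rw [le_div_iff₀ (by positivity)]; nlinarith)
  refine ⟨fitLayer₁ N₁ N₂ X, fitLayer₂ N₁ N₂ X Y, fitLayer₃ N₂, fitLayer₄ N₂,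
    (fitLayer₁_bounded hXmem (by omega)).mono h₁,
    fitLayer₂_bounded (by omega) hN₂ hδ hδ₁ hXsep hXmem hY, fitLayer₃_bounded hδ hδ₁,
    fitLayer₄_bounded.mono h₁, fitLayer₁_bounded hXmem (by omega), fitLayer₄_bounded,
    fun g hg => ⟨fun i => ?_, fun i j hij hblock => ?_⟩⟩
  · rw [hg, fitLayers_apply, ← hXx, fitNet_apply_node hX hY hN₂ i.isLt, hYy]
  · obtain ⟨a, b, hab⟩ := isAffineOn_fitNet (Y := Y) hX hY hN₂ (hij ▸ j.isLt)
      fun k hk hkN h => hblock ⟨k, hk, by omega, hij ▸ h⟩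
    refine ⟨a, b, fun z hz => ?_⟩
    rw [hg, fitLayers_apply]
    exact hab z (by rwa [hXx, hij, hXx])
end

section
/- Let d, N ∈ ℕ⁺, set K = ⌊N^{1/d}⌋², and let 𝓛 = {0,…,K−1}^d be an index set. For any tolerance Δ ∈ (0, 1/(3K)], define for each l ∈ 𝓛 the region Q_l(d,K,Δ) = { x = (x_1,…,x_d) : l_j/K ≤ x_j ≤ (l_j+1)/K − 1{l_j+1<K}·Δ for all j }. Then there exists a deep ReLU network g†: ℝ^d → ℝ^d with depth 3, width 16Nd, and all weights bounded in absolute value by 4Δ^{−2}, such that g†(x) = l/K for every x ∈ Q_l(d,K,Δ) and every l ∈ 𝓛. Moreover, the weights of the first and last affine layers are all bounded in absolute value by 1. -/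
open MeasureTheory ProbabilityTheory
open scoped ENNReal BigOperators

/-!
Write `K = k ^ 2` and `l = k a + b` with `a, b < k`. The difference of ReLUs
`σ(z - θ + Δ) - σ(z - θ)` equals `Δ` for `z ≥ θ` and `0` for `z ≤ θ - Δ`, so on `Q_l` a sum of
`k - 1` such pairs with `θ = i / k` evaluates at `t` to `a Δ`, and with `θ = i / k²` it
evaluates at `t - a / k` to `b Δ`. Hence the first hidden layer computes `a Δ`, the second
passes on `a / k` and computes `b Δ`, and the third outputs `a / k + b / k² = l / K`; the only
large weights are the rescalings `1 / (k Δ)` and `1 / (k² Δ)`. One copy of this scalar network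
per coordinate uses `(2k - 1) d ≤ 16 N d` hidden units, since `k ≤ N`.
-/

open Function Matrix

namespace Function

variable {α β : Type*}

lemma sum_extend_zero [Fintype α] [Fintype β] {M : Type*} [AddCommMonoid M] (e : α ↪ β)
    (g : α → M) : ∑ b, extend e g 0 b = ∑ a, g a :=
  (Fintype.sum_of_injective e e.injective g _ (fun b hb => extend_apply' (f := e) g 0 b hb)
    fun a => (e.injective.extend_apply g 0 a).symm).symm

lemma extend_zero_mul {M : Type*} [MulZeroClass M] (e : α ↪ β) (f g : α → M) (b : β) :
    extend e f 0 b * extend e g 0 b = extend e (f * g) 0 b := by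
  by_cases hb : ∃ a, e a = b
  · obtain ⟨a, rfl⟩ := hb
    simp [e.injective.extend_apply]
  · simp [extend_apply' _ _ _ hb]

lemma posPart_extend_zero {M : Type*} [Lattice M] [AddGroup M] (e : α ↪ β) (v : α → M) :
    (extend e v 0)⁺ = extend e v⁺ 0 := by
  funext b
  by_cases hb : ∃ a, e a = b
  · obtain ⟨a, rfl⟩ := hb
    simp [e.injective.extend_apply]
  · simp [extend_apply' _ _ _ hb]

lemma abs_extend_zero_le {e : α ↪ β} {g : α → ℝ} {B : ℝ} (hB : 0 ≤ B) (hg : ∀ a, |g a| ≤ B)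
    (b : β) : |extend e g 0 b| ≤ B := by
  by_cases hb : ∃ a, e a = b
  · obtain ⟨a, rfl⟩ := hb
    simpa [e.injective.extend_apply] using hg a
  · simpa [extend_apply' _ _ _ hb] using hB

end Function

namespace Layer

variable {α β : Type*} {m n : ℕ}

lemma Bounded.mono_s19 {A : Layer m n} {B B' : ℝ≥0∞} (h : A.Bounded B) (hB : B ≤ B') :
    A.Bounded B' :=
  ⟨fun i j => (h.1 i j).trans hB, fun i => (h.2 i).trans hB⟩

lemma bounded_of_abs_le {A : Layer m n} {B : ℝ} (hW : ∀ i j, |A.W i j| ≤ B)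
    (hb : ∀ i, |A.b i| ≤ B) : A.Bounded (ENNReal.ofReal B) := by
  have key : ∀ r : ℝ, |r| ≤ B → (‖r‖₊ : ℝ≥0∞) ≤ ENNReal.ofReal B := fun r hr => by
    rw [← enorm_eq_nnnorm, ← ofReal_norm, Real.norm_eq_abs]
    exact ENNReal.ofReal_le_ofReal hr
  exact ⟨fun i j => key _ (hW i j), fun i => key _ (hb i)⟩

noncomputable def pad (eIn : α ↪ Fin m) (eOut : β ↪ Fin n) (W : Matrix β α ℝ) (b : β → ℝ) :
    Layer m n where
  W i j := extend eOut (fun q => extend eIn (W q) 0 j) 0 i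
  b := extend eOut b 0

lemma pad_apply [Fintype α] (eIn : α ↪ Fin m) (eOut : β ↪ Fin n) (W : Matrix β α ℝ)
    (b : β → ℝ) (v : α → ℝ) :
    (pad eIn eOut W b).apply (extend eIn v 0) = extend eOut (W *ᵥ v + b) 0 := by
  funext i
  by_cases hi : ∃ q, eOut q = i
  · obtain ⟨q, rfl⟩ := hi
    simp [apply, pad, eOut.injective.extend_apply, extend_zero_mul, sum_extend_zero, mulVec,
      dotProduct]
  · simp [apply, pad, extend_apply' _ _ _ hi]

lemma pad_bounded {eIn : α ↪ Fin m} {eOut : β ↪ Fin n} {W : Matrix β α ℝ} {b : β → ℝ} {B : ℝ}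
    (hB : 0 ≤ B) (hW : ∀ q p, |W q p| ≤ B) (hb : ∀ q, |b q| ≤ B) :
    (pad eIn eOut W b).Bounded (ENNReal.ofReal B) :=
  bounded_of_abs_le
    (fun _ _ => abs_extend_zero_le hB (fun q => abs_extend_zero_le hB (hW q) _) _)
    (abs_extend_zero_le hB hb)

end Layer

namespace IndexCreation

structure ScalarNet (U : Type*) where
  w₀ : U → ℝ
  b₀ : U → ℝ
  W₁ : Matrix U U ℝ
  b₁ : U → ℝ
  W₂ : Matrix U U ℝ
  b₂ : U → ℝ
  w₃ : U → ℝ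
  b₃ : ℝ

lemma reluVec_eq_posPart {d : ℕ} (v : Fin d → ℝ) : reluVec v = v⁺ := rfl

namespace ScalarNet

variable {U : Type*} {d n : ℕ}

def eval [Fintype U] (F : ScalarNet U) (t : ℝ) : ℝ :=
  F.w₃ ⬝ᵥ (F.W₂ *ᵥ (F.W₁ *ᵥ (t • F.w₀ + F.b₀)⁺ + F.b₁)⁺ + F.b₂)⁺ + F.b₃

-- `d` parallel copies of `F`, one per input coordinate: unit `u` of copy `j` is unit `e (u, j)`.

noncomputable def inputLayer (F : ScalarNet U) (e : U × Fin d ↪ Fin n) : Layer d n :=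
  Layer.pad (Embedding.refl _) e (of fun p j => if p.2 = j then F.w₀ p.1 else 0)
    fun p => F.b₀ p.1

noncomputable def hiddenLayer (W : Matrix U U ℝ) (b : U → ℝ) (e : U × Fin d ↪ Fin n) :
    Layer n n :=
  Layer.pad e e (blockDiagonal fun _ => W) fun p => b p.1

noncomputable def outputLayer (F : ScalarNet U) (e : U × Fin d ↪ Fin n) : Layer n d :=
  Layer.pad e (Embedding.refl _) (of fun j p => if p.2 = j then F.w₃ p.1 else 0)
    fun _ => F.b₃

lemma inputLayer_apply (F : ScalarNet U) (e : U × Fin d ↪ Fin n) (x : Fin d → ℝ) :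
    (F.inputLayer e).apply x = extend e (fun p => (x p.2 • F.w₀ + F.b₀) p.1) 0 := by
  conv_lhs => rw [← extend_id x 0, ← Embedding.coe_refl]
  rw [inputLayer, Layer.pad_apply]
  congr 1
  funext ⟨u, j⟩
  simp [mulVec, dotProduct, mul_comm]

lemma hiddenLayer_apply_reluVec [Fintype U] (W : Matrix U U ℝ) (b : U → ℝ)
    (e : U × Fin d ↪ Fin n) (v : U × Fin d → ℝ) :
    (hiddenLayer W b e).apply (reluVec (extend e v 0))
      = extend e (fun p => (W *ᵥ (fun u => v (u, p.2))⁺ + b) p.1) 0 := by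
  rw [reluVec_eq_posPart, posPart_extend_zero, hiddenLayer, Layer.pad_apply]
  congr 1
  funext ⟨u, j⟩
  simp [mulVec, dotProduct, blockDiagonal_apply, Fintype.sum_prod_type, ite_mul]

lemma outputLayer_apply_reluVec [Fintype U] (F : ScalarNet U) (e : U × Fin d ↪ Fin n)
    (v : U × Fin d → ℝ) :
    (F.outputLayer e).apply (reluVec (extend e v 0))
      = fun j => F.w₃ ⬝ᵥ (fun u => v (u, j))⁺ + F.b₃ := by
  rw [reluVec_eq_posPart, posPart_extend_zero, outputLayer, Layer.pad_apply, Embedding.coe_refl,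
    extend_id]
  funext j
  simp [mulVec, dotProduct, Fintype.sum_prod_type, ite_mul]

theorem apply_layers [Fintype U] (F : ScalarNet U) (e : U × Fin d ↪ Fin n)
    (x : Fin d → ℝ) :
    (F.outputLayer e).apply (reluVec ((hiddenLayer F.W₂ F.b₂ e).apply
      (reluVec ((hiddenLayer F.W₁ F.b₁ e).apply (reluVec ((F.inputLayer e).apply x))))))
      = fun j => F.eval (x j) := by
  rw [inputLayer_apply, hiddenLayer_apply_reluVec, hiddenLayer_apply_reluVec,
    outputLayer_apply_reluVec]
  rfl

variable {B : ℝ}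

lemma inputLayer_bounded {F : ScalarNet U} {e : U × Fin d ↪ Fin n} (hB : 0 ≤ B)
    (hw : ∀ u, |F.w₀ u| ≤ B) (hb : ∀ u, |F.b₀ u| ≤ B) :
    (F.inputLayer e).Bounded (ENNReal.ofReal B) :=
  Layer.pad_bounded hB (fun p _ => by simp only [of_apply]; split_ifs <;> simp [hw, hB])
    fun p => hb p.1

lemma hiddenLayer_bounded {W : Matrix U U ℝ} {b : U → ℝ} {e : U × Fin d ↪ Fin n} (hB : 0 ≤ B)
    (hW : ∀ u v, |W u v| ≤ B) (hb : ∀ u, |b u| ≤ B) :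
    (hiddenLayer W b e).Bounded (ENNReal.ofReal B) :=
  Layer.pad_bounded hB (fun p q => by rw [blockDiagonal_apply]; split_ifs <;> simp [hW, hB])
    fun p => hb p.1

lemma outputLayer_bounded {F : ScalarNet U} {e : U × Fin d ↪ Fin n} (hB : 0 ≤ B)
    (hw : ∀ u, |F.w₃ u| ≤ B) (hb : |F.b₃| ≤ B) :
    (F.outputLayer e).Bounded (ENNReal.ofReal B) :=
  Layer.pad_bounded hB (fun _ p => by simp only [of_apply]; split_ifs <;> simp [hw, hB])
    fun _ => hb

end ScalarNet

section Staircase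

variable {n : ℕ}

/-- Unit `none` carries the value `c`; units `some (i, true)` and `some (i, false)` are the two
ReLUs whose difference is the `i`-th step of a staircase in `z` with risers at `(i + 1) * h`. -/
def stairPreact (h Δ c z : ℝ) : Option (Fin n × Bool) → ℝ
  | none => c
  | some (i, b) => z - (i + 1) * h + if b then Δ else 0

def stepSign : Option (Fin n × Bool) → ℝ
  | none => 0
  | some (_, b) => if b then 1 else -1

def OnStep (n m : ℕ) (h Δ z : ℝ) : Prop :=
  m ≤ n ∧ m * h ≤ z ∧ (m < n → z ≤ (m + 1) * h - Δ)

lemma sum_posPart_sub_posPart {m : ℕ} {h Δ z : ℝ} (hΔ : 0 < Δ) (hh : 0 ≤ h)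
    (hz : OnStep n m h Δ z) :
    ∑ i : Fin n, ((z - (i + 1) * h + Δ)⁺ - (z - (i + 1) * h)⁺) = m * Δ := by
  obtain ⟨hmn, hlo, hhi⟩ := hz
  have step : ∀ i : Fin n,
      (z - (i + 1) * h + Δ)⁺ - (z - (i + 1) * h)⁺ = if (i : ℕ) < m then Δ else 0 := by
    intro i
    split_ifs with him
    · have : ((i : ℕ) + 1 : ℝ) ≤ m := by exact_mod_cast him
      rw [posPart_eq_self.2 (by nlinarith), posPart_eq_self.2 (by nlinarith)]
      ring
    · have : (m + 1 : ℝ) ≤ (i : ℕ) + 1 := by exact_mod_cast (by omega : m + 1 ≤ (i : ℕ) + 1)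
      have := hhi (by omega)
      rw [posPart_eq_zero.2 (by nlinarith), posPart_eq_zero.2 (by nlinarith), sub_zero]
  rw [Finset.sum_congr rfl fun i _ => step i, Finset.sum_ite, Finset.sum_const_zero, add_zero,
    Finset.sum_const, Fin.card_filter_val_lt, min_eq_right hmn, nsmul_eq_mul]

lemma stepSign_dotProduct_stairPreact {m : ℕ} {h Δ c z : ℝ} (hΔ : 0 < Δ) (hh : 0 ≤ h)
    (hz : OnStep n m h Δ z) : stepSign ⬝ᵥ (stairPreact (n := n) h Δ c z)⁺ = m * Δ := by
  rw [← sum_posPart_sub_posPart hΔ hh hz]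
  simp [dotProduct, Fintype.sum_option, Fintype.sum_prod_type, stepSign, stairPreact,
    sub_eq_add_neg]

lemma smul_one_add_stairPreact (h Δ t : ℝ) :
    t • (1 : Option (Fin n × Bool) → ℝ) + stairPreact h Δ 0 0 = stairPreact h Δ t t := by
  funext u
  rcases u with _ | ⟨i, b⟩
  · simp [stairPreact]
  · simp only [Pi.add_apply, Pi.smul_apply, Pi.one_apply, smul_eq_mul, mul_one, stairPreact,
      zero_sub]
    ring

lemma abs_stairPreact_zero_le {h Δ : ℝ} (hΔ : 0 ≤ Δ) (hΔ1 : Δ ≤ 1) (hh : 0 ≤ h)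
    (hnh : n * h ≤ 1) (u : Option (Fin n × Bool)) : |stairPreact h Δ 0 0 u| ≤ 1 := by
  rcases u with _ | ⟨i, b⟩
  · simp [stairPreact]
  · have hi : ((i : ℕ) + 1 : ℝ) ≤ n := by exact_mod_cast i.isLt
    have hih : 0 ≤ ((i : ℕ) + 1 : ℝ) * h ∧ ((i : ℕ) + 1 : ℝ) * h ≤ 1 :=
      ⟨by positivity, by nlinarith⟩
    have hb : (0 : ℝ) ≤ (if b then Δ else 0) ∧ (if b then Δ else 0) ≤ 1 := by
      split_ifs <;> constructor <;> linarith
    simp only [stairPreact, zero_sub]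
    rw [abs_le]
    constructor <;> linarith

def readout (α β : ℝ) : Option (Fin n × Bool) → ℝ := Pi.single none α + β • stepSign

lemma readout_dotProduct (α β : ℝ) (v : Option (Fin n × Bool) → ℝ) :
    readout α β ⬝ᵥ v = α * v none + β * (stepSign ⬝ᵥ v) := by
  simp [readout, add_dotProduct, single_dotProduct, smul_dotProduct]

lemma abs_readout_le {α β B : ℝ} (hα : |α| ≤ B) (hβ : |β| ≤ B) (u : Option (Fin n × Bool)) :
    |readout α β u| ≤ B := by
  rcases u with _ | ⟨i, _ | _⟩ <;> simpa [readout, stepSign]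

end Staircase

noncomputable def stairNet (k : ℕ) (Δ : ℝ) : ScalarNet (Option (Fin (k - 1) × Bool)) where
  w₀ := 1
  b₀ := stairPreact (1 / k) Δ 0 0
  W₁ := of fun
    | none => readout 0 (k * Δ)⁻¹
    | some _ => readout 1 (-(k * Δ)⁻¹)
  b₁ := stairPreact (1 / k ^ 2) Δ 0 0
  W₂ := of fun
    | none => readout 1 (k ^ 2 * Δ)⁻¹
    | some _ => readout 0 0
  b₂ := 0
  w₃ := readout 1 0
  b₃ := 0

lemma stairNet_W₁_mulVec_add (k : ℕ) (Δ : ℝ) (v : Option (Fin (k - 1) × Bool) → ℝ) :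
    (stairNet k Δ).W₁ *ᵥ v + (stairNet k Δ).b₁
      = stairPreact (1 / k ^ 2) Δ ((k * Δ)⁻¹ * (stepSign ⬝ᵥ v))
          (v none - (k * Δ)⁻¹ * (stepSign ⬝ᵥ v)) := by
  funext u
  rcases u with _ | ⟨i, b⟩
  · simp [stairNet, mulVec, readout_dotProduct, stairPreact]
  · simp only [stairNet, Pi.add_apply, mulVec, of_apply, readout_dotProduct, one_mul, neg_mul,
      stairPreact, zero_sub]
    ring

-- The one-dimensional region `Q_l(1, K, Δ)`.
def cell (K : ℕ) (Δ : ℝ) (l : ℕ) : Set ℝ :=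
  {t | (l : ℝ) / K ≤ t ∧ t ≤ ((l : ℝ) + 1) / K - if l + 1 < K then Δ else 0}

section Digits

variable {k a b : ℕ} {Δ t : ℝ}

lemma mul_add_div_sq (hk : k ≠ 0) (r : ℝ) :
    ((k : ℝ) * a + r) / k ^ 2 = a / k + r * (1 / k ^ 2) := by
  field_simp

lemma onStep_coarse (ha : a < k) (hb : b < k) (ht : t ∈ cell (k ^ 2) Δ (k * a + b)) :
    OnStep (k - 1) a (1 / k) Δ t := by
  obtain ⟨hlo, hhi⟩ := ht
  have hk : k ≠ 0 := by omega
  push_cast at hlo hhi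
  rw [mul_add_div_sq hk] at hlo
  refine ⟨by omega, ?_, fun ha' => ?_⟩
  · have : 0 ≤ (b : ℝ) * (1 / k ^ 2) := by positivity
    rw [mul_one_div]
    linarith
  · have hlt : k * a + b + 1 < k ^ 2 := by nlinarith [(by omega : a + 2 ≤ k)]
    rw [if_pos hlt, add_assoc, mul_add_div_sq hk] at hhi
    have : ((b : ℝ) + 1) * (1 / k ^ 2) ≤ 1 / k := by
      calc ((b : ℝ) + 1) * (1 / k ^ 2) ≤ k * (1 / k ^ 2) := by gcongr; exact_mod_cast hb
        _ = 1 / (k : ℝ) := by field_simp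
    rw [add_one_mul, mul_one_div]
    linarith

lemma onStep_fine (ha : a < k) (hb : b < k) (ht : t ∈ cell (k ^ 2) Δ (k * a + b)) :
    OnStep (k - 1) b (1 / k ^ 2) Δ (t - a / k) := by
  obtain ⟨hlo, hhi⟩ := ht
  have hk : k ≠ 0 := by omega
  push_cast at hlo hhi
  refine ⟨by omega, ?_, fun hb' => ?_⟩
  · rw [mul_add_div_sq hk] at hlo
    linarith
  · have hlt : k * a + b + 1 < k ^ 2 := by nlinarith [(by omega : b + 2 ≤ k)]
    rw [if_pos hlt, add_assoc, mul_add_div_sq hk] at hhi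
    linarith

end Digits

lemma stairNet_eval {k l : ℕ} {Δ t : ℝ} (hΔ : 0 < Δ) (hl : l < k ^ 2)
    (ht : t ∈ cell (k ^ 2) Δ l) : (stairNet k Δ).eval t = l / (k ^ 2 : ℕ) := by
  have hk : 0 < k := Nat.pos_of_ne_zero (by rintro rfl; simp at hl)
  obtain ⟨a, b, ha, hb, rfl⟩ : ∃ a b, a < k ∧ b < k ∧ l = k * a + b :=
    ⟨l / k, l % k, Nat.div_lt_of_lt_mul (by rwa [← pow_two]), Nat.mod_lt _ hk,
      (Nat.div_add_mod l k).symm⟩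
  have hkR : (0 : ℝ) < k := by exact_mod_cast hk
  have ht₀ : 0 ≤ t := le_trans (by positivity) ht.1
  have hS₁ := stepSign_dotProduct_stairPreact (c := t) hΔ (by positivity)
    (onStep_coarse ha hb ht)
  have hS₂ := stepSign_dotProduct_stairPreact (c := a / k) hΔ (by positivity)
    (onStep_fine ha hb ht)
  have h₁ : t • (stairNet k Δ).w₀ + (stairNet k Δ).b₀ = stairPreact (1 / k) Δ t t :=
    smul_one_add_stairPreact _ _ _
  have h₂ : (stairNet k Δ).W₁ *ᵥ (stairPreact (1 / k) Δ t t)⁺ + (stairNet k Δ).b₁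
      = stairPreact (1 / k ^ 2) Δ (a / k) (t - a / k) := by
    rw [stairNet_W₁_mulVec_add, hS₁]
    simp only [Pi.posPart_apply, stairPreact, posPart_eq_self.2 ht₀]
    field_simp
  rw [ScalarNet.eval, h₁, h₂]
  simp only [stairNet, mulVec, of_apply, readout_dotProduct, Pi.posPart_apply, add_zero,
    zero_mul, one_mul, stairPreact, hS₂]
  rw [posPart_eq_self.2 (by positivity), posPart_eq_self.2 (by positivity)]
  push_cast
  field_simp

section Bounds

variable {k d n : ℕ} {Δ : ℝ}

lemma one_le_four_div_sq (hΔ : 0 < Δ) (hΔ1 : Δ ≤ 1) : 1 ≤ 4 / Δ ^ 2 := by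
  rw [le_div_iff₀ (by positivity)]
  nlinarith

lemma abs_inv_mul_le_four_div_sq {c : ℝ} (hc : 1 ≤ c) (hΔ : 0 < Δ) (hΔ1 : Δ ≤ 1) :
    |(c * Δ)⁻¹| ≤ 4 / Δ ^ 2 := by
  rw [abs_of_pos (by positivity), inv_le_iff_one_le_mul₀ (by positivity), div_mul_eq_mul_div,
    le_div_iff₀ (by positivity)]
  nlinarith

lemma stairNet_inputLayer_bounded (hk : 1 ≤ k) (hΔ : 0 < Δ) (hΔ1 : Δ ≤ 1)
    (e : Option (Fin (k - 1) × Bool) × Fin d ↪ Fin n) :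
    ((stairNet k Δ).inputLayer e).Bounded 1 := by
  have hkR : (1 : ℝ) ≤ k := by exact_mod_cast hk
  rw [← ENNReal.ofReal_one]
  refine ScalarNet.inputLayer_bounded zero_le_one (fun _ => by simp [stairNet])
    (abs_stairPreact_zero_le hΔ.le hΔ1 (by positivity) ?_)
  rw [mul_one_div, div_le_one (by positivity)]
  exact_mod_cast k.sub_le 1

lemma stairNet_hiddenLayer₁_bounded (hk : 1 ≤ k) (hΔ : 0 < Δ) (hΔ1 : Δ ≤ 1)
    (e : Option (Fin (k - 1) × Bool) × Fin d ↪ Fin n) :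
    (ScalarNet.hiddenLayer (stairNet k Δ).W₁ (stairNet k Δ).b₁ e).Bounded
      (ENNReal.ofReal (4 / Δ ^ 2)) := by
  have hkR : (1 : ℝ) ≤ k := by exact_mod_cast hk
  have h1 := one_le_four_div_sq hΔ hΔ1
  have hB₀ : |(0 : ℝ)| ≤ 4 / Δ ^ 2 := by rw [abs_zero]; positivity
  have hB₁ : |(1 : ℝ)| ≤ 4 / Δ ^ 2 := by simpa using h1
  have hc := abs_inv_mul_le_four_div_sq hkR hΔ hΔ1
  refine ScalarNet.hiddenLayer_bounded (by positivity) (fun u v => ?_) fun u => ?_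
  · rcases u with _ | _
    · exact abs_readout_le hB₀ hc v
    · exact abs_readout_le hB₁ (by rwa [abs_neg]) v
  · refine (abs_stairPreact_zero_le hΔ.le hΔ1 (by positivity) ?_ u).trans h1
    rw [mul_one_div, div_le_one (by positivity)]
    have : ((k - 1 : ℕ) : ℝ) ≤ k := by exact_mod_cast k.sub_le 1
    nlinarith

lemma stairNet_hiddenLayer₂_bounded (hk : 1 ≤ k) (hΔ : 0 < Δ) (hΔ1 : Δ ≤ 1)
    (e : Option (Fin (k - 1) × Bool) × Fin d ↪ Fin n) :
    (ScalarNet.hiddenLayer (stairNet k Δ).W₂ (stairNet k Δ).b₂ e).Bounded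
      (ENNReal.ofReal (4 / Δ ^ 2)) := by
  have hkR : (1 : ℝ) ≤ k ^ 2 := by exact_mod_cast Nat.one_le_pow 2 k hk
  have hB₀ : |(0 : ℝ)| ≤ 4 / Δ ^ 2 := by rw [abs_zero]; positivity
  have hB₁ : |(1 : ℝ)| ≤ 4 / Δ ^ 2 := by simpa using one_le_four_div_sq hΔ hΔ1
  have hc := abs_inv_mul_le_four_div_sq hkR hΔ hΔ1
  refine ScalarNet.hiddenLayer_bounded (by positivity) (fun u v => ?_) fun u => ?_
  · rcases u with _ | _
    · exact abs_readout_le hB₁ hc v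
    · exact abs_readout_le hB₀ hB₀ v
  · simp only [stairNet, Pi.zero_apply, abs_zero]
    positivity

lemma stairNet_outputLayer_bounded (e : Option (Fin (k - 1) × Bool) × Fin d ↪ Fin n) :
    ((stairNet k Δ).outputLayer e).Bounded 1 := by
  rw [← ENNReal.ofReal_one]
  exact ScalarNet.outputLayer_bounded zero_le_one
    (abs_readout_le (by simp) (by simp)) (by simp [stairNet])

end Bounds

lemma floor_rpow_inv_mem_Icc (d : ℕ) {N : ℕ} (hN : 0 < N) :
    ⌊(N : ℝ) ^ (d : ℝ)⁻¹⌋₊ ∈ Set.Icc 1 N := by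
  have hN1 : (1 : ℝ) ≤ N := by exact_mod_cast hN
  refine ⟨Nat.le_floor ?_, Nat.floor_le_of_le ?_⟩
  · simpa using Real.one_le_rpow hN1 (by positivity)
  · simpa using Real.rpow_le_rpow_of_exponent_le hN1 (Nat.cast_inv_le_one d)

end IndexCreation

open IndexCreation in
theorem stmt19_index_creation_general (d N : ℕ) (hN : 0 < N)
    (K : ℕ) (hK : K = (Nat.floor ((N : ℝ) ^ ((d : ℝ)⁻¹))) ^ 2)
    (Δ : ℝ) (hΔpos : 0 < Δ) (hΔle : Δ ≤ 1 / (3 * (K : ℝ))) :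
    ∃ (A₀ : Layer d (16 * N * d)) (A₁ A₂ : Layer (16 * N * d) (16 * N * d))
      (A₃ : Layer (16 * N * d) d),
      A₀.Bounded (ENNReal.ofReal (4 / Δ ^ 2)) ∧ A₁.Bounded (ENNReal.ofReal (4 / Δ ^ 2)) ∧
      A₂.Bounded (ENNReal.ofReal (4 / Δ ^ 2)) ∧ A₃.Bounded (ENNReal.ofReal (4 / Δ ^ 2)) ∧
      A₀.Bounded 1 ∧ A₃.Bounded 1 ∧
      ∀ (l : Fin d → ℕ), (∀ j, l j < K) →
        ∀ x : Fin d → ℝ,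
          (∀ j, (l j : ℝ) / K ≤ x j ∧
              x j ≤ ((l j : ℝ) + 1) / K - (if l j + 1 < K then Δ else 0)) →
          A₃.apply (reluVec (A₂.apply (reluVec (A₁.apply (reluVec (A₀.apply x))))))
            = fun j => (l j : ℝ) / K := by
  obtain ⟨hk₁, hkN⟩ := floor_rpow_inv_mem_Icc d hN
  set k := ⌊(N : ℝ) ^ (d : ℝ)⁻¹⌋₊
  subst hK
  have hΔ1 : Δ ≤ 1 := by
    refine hΔle.trans ?_
    rw [div_le_one (by positivity)]
    have : (1 : ℝ) ≤ ((k ^ 2 : ℕ) : ℝ) := by exact_mod_cast Nat.one_le_pow 2 k hk₁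
    linarith
  obtain ⟨e⟩ : Nonempty (Option (Fin (k - 1) × Bool) × Fin d ↪ Fin (16 * N * d)) :=
    Function.Embedding.nonempty_of_card_le (by
      simp only [Fintype.card_prod, Fintype.card_option, Fintype.card_fin, Fintype.card_bool]
      exact Nat.mul_le_mul_right d (by omega))
  have h1 : (1 : ℝ≥0∞) ≤ ENNReal.ofReal (4 / Δ ^ 2) :=
    ENNReal.one_le_ofReal.2 (one_le_four_div_sq hΔpos hΔ1)
  have hA₀ := stairNet_inputLayer_bounded hk₁ hΔpos hΔ1 e
  have hA₃ := stairNet_outputLayer_bounded (Δ := Δ) e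
  refine ⟨_, _, _, _, hA₀.mono_s19 h1, stairNet_hiddenLayer₁_bounded hk₁ hΔpos hΔ1 e,
    stairNet_hiddenLayer₂_bounded hk₁ hΔpos hΔ1 e, hA₃.mono_s19 h1, hA₀, hA₃, fun l hl x hx => ?_⟩
  rw [ScalarNet.apply_layers]
  exact funext fun j => stairNet_eval hΔpos (hl j) (hx j)

/-- index creation on the `d`-dimensional unit cube.
With `K = ⌊N^{1/d}⌋²` and tolerance `Δ ∈ (0, 1/(3K)]`, there is a depth-3 ReLU network
`g† : ℝ^d → ℝ^d` of width `16Nd` with all weights bounded by `4Δ⁻²` (first and last affine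
layers bounded by `1`) such that `g†(x) = l/K` for every `x` in the region `Q_l(d,K,Δ)`
and every index `l ∈ {0,…,K-1}^d`. -/
theorem stmt19_index_creation (d N : ℕ) (hd : 0 < d) (hN : 0 < N)
    (K : ℕ) (hK : K = (Nat.floor ((N : ℝ) ^ ((d : ℝ)⁻¹))) ^ 2)
    (Δ : ℝ) (hΔpos : 0 < Δ) (hΔle : Δ ≤ 1 / (3 * (K : ℝ))) :
    ∃ (A₀ : Layer d (16 * N * d)) (A₁ A₂ : Layer (16 * N * d) (16 * N * d))
      (A₃ : Layer (16 * N * d) d),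
      A₀.Bounded (ENNReal.ofReal (4 / Δ ^ 2)) ∧ A₁.Bounded (ENNReal.ofReal (4 / Δ ^ 2)) ∧
      A₂.Bounded (ENNReal.ofReal (4 / Δ ^ 2)) ∧ A₃.Bounded (ENNReal.ofReal (4 / Δ ^ 2)) ∧
      A₀.Bounded 1 ∧ A₃.Bounded 1 ∧
      ∀ (l : Fin d → ℕ), (∀ j, l j < K) →
        ∀ x : Fin d → ℝ,
          (∀ j, (l j : ℝ) / K ≤ x j ∧
              x j ≤ ((l j : ℝ) + 1) / K - (if l j + 1 < K then Δ else 0)) →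
          A₃.apply (reluVec (A₂.apply (reluVec (A₁.apply (reluVec (A₀.apply x))))))
            = fun j => (l j : ℝ) / K :=
  stmt19_index_creation_general d N hN K hK Δ hΔpos hΔle
end
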